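/- arXiv:1604.00550 — 12 statements merged into one kernel-verified Lean document; each statement's English description precedes it below -/
import Mathlib

section
/- Let G be a finite simple graph, let v be a vertex of G, and let H be the star-clique transform of G at v. Then v is 1-unique in G if and only if td(H) < td(G). -/
/-- A `k`-ranking of a graph `G`: a labeling of the vertices with labels from `{1,…,k}` such
that every path joining two distinct vertices with the same label has an internal vertex with
a strictly larger label. -/
def IsRanking {V : Type*} (G : SimpleGraph V) (k : ℕ) (f : V → ℕ) : Prop :=
  (∀ v, 1 ≤ f v ∧ f v ≤ k) ∧
  ∀ ⦃u w : V⦄ (p : G.Walk u w), p.IsPath → u ≠ w → f u = f w →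
    ∃ x ∈ p.support, x ≠ u ∧ x ≠ w ∧ f u < f x

/-- The tree-depth of `G`: the least `k` for which `G` admits a `k`-ranking. -/
noncomputable def treedepth {V : Type*} (G : SimpleGraph V) : ℕ :=
  sInf {k | ∃ f, IsRanking G k f}

/-- The star-clique transform of `G` at `v`: delete `v`, and join two remaining vertices iff
they were adjacent in `G` or both were neighbors of `v`. -/
def starClique {V : Type*} (G : SimpleGraph V) (v : V) : SimpleGraph {x : V // x ≠ v} :=
  SimpleGraph.fromRel (fun x y => G.Adj x y ∨ (G.Adj v x ∧ G.Adj v y))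

section Aux

variable {V : Type*}

lemma isRanking_mono {G : SimpleGraph V} {k k' : ℕ} (h : k ≤ k') {f : V → ℕ}
    (hf : IsRanking G k f) : IsRanking G k' f :=
  ⟨fun x => ⟨(hf.1 x).1, le_trans (hf.1 x).2 h⟩, hf.2⟩

lemma exists_ranking [Fintype V] (G : SimpleGraph V) :
    ∃ f, IsRanking G (Fintype.card V) f := by
  classical
  refine ⟨fun x => (Fintype.equivFin V x : ℕ) + 1, ?_, ?_⟩
  · intro x
    simp only
    have := (Fintype.equivFin V x).is_lt
    omega
  · intro u w p hp huw hfw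
    simp only at hfw
    exact absurd ((Fintype.equivFin V).injective (Fin.ext (by omega))) huw

lemma treedepth_mem [Fintype V] (G : SimpleGraph V) :
    ∃ f, IsRanking G (treedepth G) f :=
  Nat.sInf_mem (⟨_, exists_ranking G⟩ : {k | ∃ f, IsRanking G k f}.Nonempty)

lemma treedepth_le [Fintype V] {G : SimpleGraph V} {k : ℕ} (h : ∃ f, IsRanking G k f) :
    treedepth G ≤ k := Nat.sInf_le h

lemma starClique_adj {G : SimpleGraph V} {v : V} {x y : {x : V // x ≠ v}} :
    (starClique G v).Adj x y ↔ x ≠ y ∧ (G.Adj x y ∨ (G.Adj v x ∧ G.Adj v y)) := by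
  simp only [starClique, SimpleGraph.fromRel_adj]
  constructor
  · rintro ⟨h1, (h2 | ⟨h3, h4⟩) | (h2 | ⟨h3, h4⟩)⟩
    · exact ⟨h1, Or.inl h2⟩
    · exact ⟨h1, Or.inr ⟨h3, h4⟩⟩
    · exact ⟨h1, Or.inl h2.symm⟩
    · exact ⟨h1, Or.inr ⟨h4, h3⟩⟩
  · rintro ⟨h1, h2⟩
    exact ⟨h1, Or.inl h2⟩

/-- From a walk in the star-clique transform, produce a walk in `G` whose support only adds
possibly `v`. -/
lemma lower_walk {G : SimpleGraph V} {v : V} {a b : {x : V // x ≠ v}}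
    (q : (starClique G v).Walk a b) :
    ∃ p : G.Walk a.val b.val, ∀ z ∈ p.support, z = v ∨ ∃ c ∈ q.support, c.val = z := by
  induction q with
  | nil => exact ⟨.nil, by simp⟩
  | @cons x y z h q ih =>
    obtain ⟨p', hp'⟩ := ih
    rw [starClique_adj] at h
    obtain ⟨hne, hadj | ⟨hvx, hvy⟩⟩ := h
    · refine ⟨.cons hadj p', ?_⟩
      intro t ht
      rw [SimpleGraph.Walk.support_cons] at ht
      rcases List.mem_cons.mp ht with rfl | ht
      · exact Or.inr ⟨x, by simp, rfl⟩
      · rcases hp' t ht with h | ⟨c, hc, rfl⟩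
        · exact Or.inl h
        · exact Or.inr ⟨c, by simp [hc], rfl⟩
    · refine ⟨.cons hvx.symm (.cons hvy p'), ?_⟩
      intro t ht
      simp only [SimpleGraph.Walk.support_cons, List.mem_cons] at ht
      rcases ht with rfl | rfl | ht
      · exact Or.inr ⟨x, by simp, rfl⟩
      · exact Or.inl rfl
      · rcases hp' t ht with h | ⟨c, hc, rfl⟩
        · exact Or.inl h
        · exact Or.inr ⟨c, by simp [hc], rfl⟩

/-- From a walk in `G` between vertices distinct from `v`, produce a walk in the star-clique
transform whose support is contained in that of the original walk. -/
lemma lift_walk {G : SimpleGraph V} {v : V} :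
    ∀ (n : ℕ) {a b : V} (p : G.Walk a b), p.length ≤ n → ∀ (ha : a ≠ v) (hb : b ≠ v),
      ∃ q : (starClique G v).Walk ⟨a, ha⟩ ⟨b, hb⟩, ∀ c ∈ q.support, c.val ∈ p.support := by
  intro n
  induction n with
  | zero =>
    intro a b p hp ha hb
    cases p with
    | nil => exact ⟨.nil, by simp⟩
    | cons h q => simp at hp
  | succ n ih =>
    intro a b p hp ha hb
    cases p with
    | nil => exact ⟨.nil, by simp⟩
    | @cons _ c _ h q =>
      by_cases hc : v = c
      · subst hc
        cases q with
        | nil => exact absurd rfl hb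
        | @cons _ d _ h2 q2 =>
          have hd : d ≠ v := h2.ne'
          have hlen : q2.length ≤ n := by
            simp only [SimpleGraph.Walk.length_cons] at hp; omega
          obtain ⟨q', hq'⟩ := ih q2 hlen hd hb
          by_cases had : a = d
          · subst had
            refine ⟨q', ?_⟩
            intro t ht
            have := hq' t ht
            simp only [SimpleGraph.Walk.support_cons, List.mem_cons]
            tauto
          · have hedge : (starClique G v).Adj ⟨a, ha⟩ ⟨d, hd⟩ := by
              rw [starClique_adj]
              exact ⟨by simp [had], Or.inr ⟨h.symm, h2⟩⟩
            refine ⟨.cons hedge q', ?_⟩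
            intro t ht
            simp only [SimpleGraph.Walk.support_cons, List.mem_cons] at ht ⊢
            rcases ht with rfl | ht
            · exact Or.inl rfl
            · have := hq' t ht
              tauto
      · have hc' : c ≠ v := Ne.symm hc
        have hlen : q.length ≤ n := by
          simp only [SimpleGraph.Walk.length_cons] at hp; omega
        obtain ⟨q', hq'⟩ := ih q hlen hc' hb
        have hedge : (starClique G v).Adj ⟨a, ha⟩ ⟨c, hc'⟩ := by
          rw [starClique_adj]
          exact ⟨by simp [h.ne], Or.inl h⟩
        refine ⟨.cons hedge q', ?_⟩
        intro t ht
        simp only [SimpleGraph.Walk.support_cons, List.mem_cons] at ht ⊢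
        rcases ht with rfl | ht
        · exact Or.inl rfl
        · exact Or.inr (hq' t ht)

end Aux

/-- Theorem (Barrus–Sinkovic): `v` is 1-unique in `G` (some optimal ranking of `G` gives `v`,
and only `v`, the label 1) iff the star-clique transform of `G` at `v` has strictly smaller
tree-depth than `G`. -/
theorem oneUnique_iff_starClique_treedepth_lt {V : Type*} [Fintype V]
    (G : SimpleGraph V) (v : V) :
    (∃ f, IsRanking G (treedepth G) f ∧ f v = 1 ∧ ∀ u, u ≠ v → f u ≠ 1) ↔
      treedepth (starClique G v) < treedepth G := by
  classical
  constructor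
  · rintro ⟨f, hf, hfv, hfu⟩
    have htd1 : 1 ≤ treedepth G := le_trans (hf.1 v).1 (hf.1 v).2
    have hge2 : ∀ x : {x : V // x ≠ v}, 2 ≤ f x.val := by
      intro x
      have h1 := (hf.1 x.val).1
      have h2 := hfu x.val x.2
      omega
    set g : {x : V // x ≠ v} → ℕ := fun x => f x.val - 1 with hg
    have hrank : IsRanking (starClique G v) (treedepth G - 1) g := by
      constructor
      · intro x
        have := hge2 x
        have := (hf.1 x.val).2
        constructor <;> simp only [hg] <;> omega
      · intro a b q hq hab hgab
        obtain ⟨p, hp⟩ := lower_walk q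
        have habv : a.val ≠ b.val := fun h => hab (Subtype.ext h)
        have hfab : f a.val = f b.val := by
          have := hge2 a; have := hge2 b
          simp only [hg] at hgab; omega
        obtain ⟨x, hx, hxa, hxb, hfx⟩ := hf.2 p.bypass p.bypass_isPath habv hfab
        have hx' := p.support_bypass_subset hx
        rcases hp x hx' with rfl | ⟨c, hc, rfl⟩
        · exfalso
          have := hge2 a
          omega
        · refine ⟨c, hc, ?_, ?_, ?_⟩
          · exact fun h => hxa (by rw [h])
          · exact fun h => hxb (by rw [h])
          · have := hge2 a; have := hge2 c
            simp only [hg]; omega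
    have h1 : treedepth (starClique G v) ≤ treedepth G - 1 := treedepth_le ⟨g, hrank⟩
    omega
  · intro hlt
    obtain ⟨g, hg⟩ := treedepth_mem (starClique G v)
    set f : V → ℕ := fun x => if h : x = v then 1 else g ⟨x, h⟩ + 1 with hfdef
    have hfv : f v = 1 := by simp [hfdef]
    have hfne : ∀ u (h : u ≠ v), f u = g ⟨u, h⟩ + 1 := by
      intro u h; simp [hfdef, h]
    have hrank : IsRanking G (treedepth (starClique G v) + 1) f := by
      constructor
      · intro x
        by_cases hx : x = v
        · subst hx; simp [hfv]
        · rw [hfne x hx]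
          have := (hg.1 ⟨x, hx⟩).1
          have := (hg.1 ⟨x, hx⟩).2
          omega
      · intro u w p hp huw hfuw
        have hval : ∀ x, f x = 1 → x = v := by
          intro x hx
          by_contra h
          rw [hfne x h] at hx
          have := (hg.1 ⟨x, h⟩).1
          omega
        have huv : u ≠ v := by
          intro h
          have h1 : f u = 1 := by rw [h, hfv]
          have h2 : f w = 1 := by rw [← hfuw, h1]
          exact huw (h.trans (hval w h2).symm)
        have hwv : w ≠ v := by
          intro h
          have h2 : f w = 1 := by rw [h, hfv]
          have h1 : f u = 1 := by rw [hfuw, h2]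
          exact huw ((hval u h1).trans h.symm)
        obtain ⟨q, hq⟩ := lift_walk p.length p le_rfl huv hwv
        have hne : (⟨u, huv⟩ : {x : V // x ≠ v}) ≠ ⟨w, hwv⟩ := by
          simp [Subtype.ext_iff, huw]
        have hguv : g ⟨u, huv⟩ = g ⟨w, hwv⟩ := by
          rw [hfne u huv, hfne w hwv] at hfuw
          omega
        obtain ⟨c, hc, hcu, hcw, hgc⟩ := hg.2 q.bypass q.bypass_isPath hne hguv
        have hc' := q.support_bypass_subset hc
        refine ⟨c.val, hq c hc', ?_, ?_, ?_⟩
        · exact fun h => hcu (Subtype.ext h)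
        · exact fun h => hcw (Subtype.ext h)
        · rw [hfne u huv, hfne c.val c.2]
          have : g ⟨c.val, c.2⟩ = g c := by congr
          omega
    have hle : treedepth G ≤ treedepth (starClique G v) + 1 := treedepth_le ⟨f, hrank⟩
    have heq : treedepth (starClique G v) + 1 ≤ treedepth G := hlt
    refine ⟨f, isRanking_mono (by omega) hrank, hfv, ?_⟩
    intro u hu
    rw [hfne u hu]
    have := (hg.1 ⟨u, hu⟩).1
    omega
end

section
/- For every positive integer k, the k-net has tree-depth exactly k+1. -/
/-- The `k`-net: a complete graph `K_k` (the `Sum.inl` vertices) together with a pendant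
vertex `Sum.inr i` attached to each clique vertex `Sum.inl i`. -/
def net (k : ℕ) : SimpleGraph (Fin k ⊕ Fin k) :=
  SimpleGraph.fromRel (fun x y =>
    (∃ i j : Fin k, x = Sum.inl i ∧ y = Sum.inl j) ∨
    (∃ i : Fin k, x = Sum.inl i ∧ y = Sum.inr i))

open Sum SimpleGraph

lemma adj_inl_inl {k : ℕ} {i j : Fin k} (h : i ≠ j) : (net k).Adj (inl i) (inl j) := by
  simp [net, SimpleGraph.fromRel_adj]
  tauto

lemma adj_inl_inr {k : ℕ} (i : Fin k) : (net k).Adj (inl i) (inr i) := by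
  simp [net, SimpleGraph.fromRel_adj]

lemma eq_of_adj_inr {k : ℕ} {i : Fin k} {x} (h : (net k).Adj (inr i) x) : x = inl i := by
  simp only [net, SimpleGraph.fromRel_adj] at h
  obtain ⟨-, h | h⟩ := h <;> rcases h with ⟨a, b, ha, hb⟩ | ⟨a, ha, hb⟩ <;> simp_all

set_option linter.unnecessarySeqFocus false in
lemma ranking_up (k : ℕ) :
    IsRanking (net k) (k + 1) (Sum.elim (fun i => (i : ℕ) + 2) (fun _ => 1)) := by
  constructor
  · rintro (i | i) <;> simp <;> omega
  · rintro (i | i) (j | j) p hp hne heq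
    · simp only [Sum.elim_inl, Nat.add_right_cancel_iff] at heq
      exact absurd (congrArg inl (Fin.val_injective heq)) hne
    · simp at heq
    · simp at heq
    · cases p with
      | nil => exact absurd rfl hne
      | cons h q =>
        have hb := eq_of_adj_inr h
        subst hb
        refine ⟨inl i, ?_, by simp, by simp, by simp⟩
        simp [SimpleGraph.Walk.support_cons]

lemma no_ranking (k : ℕ) (hk : 1 ≤ k) (f : Fin k ⊕ Fin k → ℕ) :
    ¬ IsRanking (net k) k f := by
  rintro ⟨hb, hr⟩
  -- clique vertices have distinct labels
  have hdist : ∀ i j : Fin k, i ≠ j → f (inl i) ≠ f (inl j) := by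
    intro i j hij heq
    have hne : (inl i : Fin k ⊕ Fin k) ≠ inl j := by simp [hij]
    have hp : ((SimpleGraph.Walk.cons (adj_inl_inl hij) SimpleGraph.Walk.nil)).IsPath := by
      simp [SimpleGraph.Walk.isPath_def, hne]
    obtain ⟨x, hx, hx1, hx2, -⟩ := hr _ hp hne heq
    simp [SimpleGraph.Walk.support_cons] at hx
    tauto
  set g : Fin k → Fin k := fun i => ⟨f (inl i) - 1, by have := hb (inl i); omega⟩ with hg
  have ginj : Function.Injective g := by
    intro i j hij
    by_contra hne
    have h1 := hb (inl i); have h2 := hb (inl j)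
    have := Fin.val_eq_val (g i) (g j)
    simp only [hg] at hij
    have : f (inl i) - 1 = f (inl j) - 1 := congrArg Fin.val hij
    exact hdist i j hne (by omega)
  have gsurj : Function.Surjective g := Finite.surjective_of_injective ginj
  obtain ⟨v, hv⟩ := gsurj ⟨0, hk⟩
  have hv1 : f (inl v) = 1 := by
    have := hb (inl v)
    have := congrArg Fin.val hv
    simp [hg] at this
    omega
  have hbv := hb (inr v)
  rcases eq_or_lt_of_le hbv.1 with h1 | h2
  · -- pendant of v has label 1 : edge path to inl v
    have hne : (inr v : Fin k ⊕ Fin k) ≠ inl v := by simp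
    have hadj : (net k).Adj (inr v) (inl v) := (adj_inl_inr v).symm
    have hp : ((SimpleGraph.Walk.cons hadj SimpleGraph.Walk.nil)).IsPath := by
      simp [SimpleGraph.Walk.isPath_def]
    obtain ⟨x, hx, hx1, hx2, -⟩ := hr _ hp hne (by omega)
    simp [SimpleGraph.Walk.support_cons] at hx
    tauto
  · -- label ℓ ≥ 2 ; find clique vertex with the same label
    obtain ⟨u, hu⟩ := gsurj ⟨f (inr v) - 1, by omega⟩
    have hu1 : f (inl u) = f (inr v) := by
      have := hb (inl u)
      have := congrArg Fin.val hu
      simp [hg] at this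
      omega
    have huv : u ≠ v := by intro h; rw [h, hv1] at hu1; omega
    have hadj1 : (net k).Adj (inr v) (inl v) := (adj_inl_inr v).symm
    have hadj2 : (net k).Adj (inl v) (inl u) := adj_inl_inl (Ne.symm huv)
    have hne : (inr v : Fin k ⊕ Fin k) ≠ inl u := by simp
    have hp : ((SimpleGraph.Walk.cons hadj1
        (SimpleGraph.Walk.cons hadj2 SimpleGraph.Walk.nil))).IsPath := by
      simp [SimpleGraph.Walk.isPath_def, huv]
      exact fun h => huv h.symm
    obtain ⟨x, hx, hx1, hx2, hlt⟩ := hr _ hp hne hu1.symm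
    simp [SimpleGraph.Walk.support_cons] at hx
    rcases hx with h | h | h
    · exact hx1 h
    · rw [h, hv1] at hlt; omega
    · exact hx2 h

/-- For every positive integer `k`, the `k`-net has tree-depth exactly `k + 1`. -/
theorem treedepth_net (k : ℕ) (hk : 1 ≤ k) : treedepth (net k) = k + 1 := by
  have hmem : (k + 1) ∈ {n | ∃ f, IsRanking (net k) n f} := ⟨_, ranking_up k⟩
  refine le_antisymm (Nat.sInf_le hmem) (le_csInf ⟨_, hmem⟩ ?_)
  rintro m ⟨f, hf⟩
  by_contra hlt
  push_neg at hlt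
  have hm : m ≤ k := by omega
  exact no_ranking k hk f ⟨fun v => ⟨(hf.1 v).1, le_trans (hf.1 v).2 hm⟩, hf.2⟩
end

section
/- For every positive integer a, the Cartesian (box) product K_a □ K_2 has tree-depth exactly ⌈3a/2⌉. -/
/-- The Cartesian (box) product `K_a □ K_2`. -/
def KaK2 (a : ℕ) : SimpleGraph (Fin a × Fin 2) :=
  SimpleGraph.boxProd ⊤ ⊤

namespace TDAux

open SimpleGraph

variable {a k : ℕ} {f : Fin a × Fin 2 → ℕ}

lemma kak2_adj {x y : Fin a × Fin 2} :
    (KaK2 a).Adj x y ↔ (x.1 ≠ y.1 ∧ x.2 = y.2) ∨ (x.2 ≠ y.2 ∧ x.1 = y.1) := by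
  simp [KaK2, SimpleGraph.boxProd_adj]

/-- Adjacent vertices have different labels in a ranking. -/
lemma adj_ne (hf : IsRanking (KaK2 a) k f) {u w : Fin a × Fin 2}
    (h : (KaK2 a).Adj u w) : f u ≠ f w := by
  intro he
  have hp : (SimpleGraph.Walk.cons h SimpleGraph.Walk.nil).IsPath := by
    simp [SimpleGraph.Walk.cons_isPath_iff, h.ne]
  obtain ⟨x, hx, hxu, hxw, _⟩ := hf.2 _ hp h.ne he
  simp only [SimpleGraph.Walk.support_cons, SimpleGraph.Walk.support_nil,
    List.mem_cons, List.mem_singleton] at hx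
  rcases hx with rfl | hx
  · exact hxu rfl
  · rcases hx with rfl | hx
    · exact hxw rfl
    · simp at hx

/-- For a path of length two between like-labeled ends, the middle vertex is larger. -/
lemma mid (hf : IsRanking (KaK2 a) k f) {u v w : Fin a × Fin 2}
    (h1 : (KaK2 a).Adj u v) (h2 : (KaK2 a).Adj v w) (huw : u ≠ w)
    (he : f u = f w) : f u < f v := by
  have hp : (SimpleGraph.Walk.cons h1 (SimpleGraph.Walk.cons h2 SimpleGraph.Walk.nil)).IsPath := by
    simp [SimpleGraph.Walk.cons_isPath_iff, h1.ne, h2.ne, huw]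
  obtain ⟨x, hx, hxu, hxw, hlt⟩ := hf.2 _ hp huw he
  simp only [SimpleGraph.Walk.support_cons, SimpleGraph.Walk.support_nil,
    List.mem_cons, List.mem_singleton] at hx
  rcases hx with rfl | hx
  · exact absurd rfl hxu
  · rcases hx with rfl | hx
    · exact hlt
    · rcases hx with rfl | hx
      · exact absurd rfl hxw
      · simp at hx

/-- The explicit ranking achieving `⌈3a/2⌉`. -/
def rk (a : ℕ) (v : Fin a × Fin 2) : ℕ :=
  if v.1.val < 2 * (a / 2) ∧ v.1.val % 2 = v.2.val then v.1.val / 2 + 1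
  else a / 2 + 1 + v.1.val + (if v.1.val < 2 * (a / 2) then 0 else v.2.val)

lemma rk_bounds (v : Fin a × Fin 2) : 1 ≤ rk a v ∧ rk a v ≤ (3 * a + 1) / 2 := by
  have hv1 := v.1.isLt
  have hv2 := v.2.isLt
  simp only [rk]
  split_ifs <;> omega

lemma rk_small {v : Fin a × Fin 2} (h : rk a v ≤ a / 2) : v.1.val % 2 = v.2.val := by
  have hv1 := v.1.isLt
  have hv2 := v.2.isLt
  simp only [rk] at h
  split_ifs at h <;> omega

lemma rk_eq {u w : Fin a × Fin 2} (hne : u ≠ w) (h : rk a u = rk a w) :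
    u.1.val < 2 * (a / 2) ∧ u.1.val % 2 = u.2.val ∧
    w.1.val < 2 * (a / 2) ∧ w.1.val % 2 = w.2.val ∧
    u.1.val / 2 = w.1.val / 2 ∧ u.2.val ≠ w.2.val := by
  have hne' : ¬(u.1.val = w.1.val ∧ u.2.val = w.2.val) := by
    rintro ⟨h1, h2⟩
    exact hne (Prod.ext (Fin.ext h1) (Fin.ext h2))
  have hu1 := u.1.isLt
  have hw1 := w.1.isLt
  have hu2 := u.2.isLt
  have hw2 := w.2.isLt
  simp only [rk] at h
  split_ifs at h <;> omega

/-- Along a walk all of whose vertices satisfy the parity condition, the second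
coordinate is constant. -/
lemma walk_snd : ∀ {u w : Fin a × Fin 2} (p : (KaK2 a).Walk u w),
    (∀ x ∈ p.support, x.1.val % 2 = x.2.val) → u.2 = w.2 := by
  intro u w p
  induction p with
  | nil => exact fun _ => rfl
  | @cons u v w h q ih =>
    intro hs
    have huv : u.2 = v.2 := by
      rcases kak2_adj.mp h with ⟨_, h2⟩ | ⟨h2, h1⟩
      · exact h2
      · exfalso
        have hu := hs u (by simp)
        have hv := hs v (by simp [SimpleGraph.Walk.start_mem_support])
        apply h2
        apply Fin.ext
        rw [← hu, ← hv, h1]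
    rw [huv]
    exact ih (fun x hx => hs x (by simp [hx]))

lemma rk_isRanking (a : ℕ) : IsRanking (KaK2 a) ((3 * a + 1) / 2) (rk a) := by
  constructor
  · exact rk_bounds
  · intro u w p hp hne heq
    obtain ⟨hu1, hu2, hw1, hw2, hdiv, hsnd⟩ := rk_eq hne heq
    by_contra hcon
    push_neg at hcon
    have hru : rk a u ≤ a / 2 := by
      have hlt := u.1.isLt
      simp only [rk]
      split_ifs <;> omega
    have hall : ∀ x ∈ p.support, x.1.val % 2 = x.2.val := by
      intro x hx
      by_cases hxu : x = u
      · subst hxu; exact hu2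
      by_cases hxw : x = w
      · subst hxw; exact hw2
      exact rk_small (le_trans (hcon x hx hxu hxw) hru)
    exact hsnd (congrArg Fin.val (walk_snd p hall))

lemma lower (hf : IsRanking (KaK2 a) k f) : (3 * a + 1) / 2 ≤ k := by
  classical
  set r0 : Fin a → ℕ := fun i => f (i, 0) with hr0
  set r1 : Fin a → ℕ := fun i => f (i, 1) with hr1
  have inj0 : Function.Injective r0 := by
    intro i i' h
    by_contra hne
    have hadj : (KaK2 a).Adj (i, 0) (i', 0) := kak2_adj.mpr (Or.inl ⟨hne, rfl⟩)
    exact adj_ne hf hadj h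
  have inj1 : Function.Injective r1 := by
    intro i i' h
    by_contra hne
    have hadj : (KaK2 a).Adj (i, 1) (i', 1) := kak2_adj.mpr (Or.inl ⟨hne, rfl⟩)
    exact adj_ne hf hadj h
  have hcol : ∀ i : Fin a, f (i, 0) ≠ f (i, 1) := by
    intro i
    have hadj : (KaK2 a).Adj (i, 0) (i, 1) :=
      kak2_adj.mpr (Or.inr ⟨by simp, rfl⟩)
    exact adj_ne hf hadj
  set S0 := Finset.image r0 Finset.univ with hS0
  set S1 := Finset.image r1 Finset.univ with hS1
  have c0 : S0.card = a := by
    rw [hS0, Finset.card_image_of_injective _ inj0, Finset.card_univ, Fintype.card_fin]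
  have c1 : S1.card = a := by
    rw [hS1, Finset.card_image_of_injective _ inj1, Finset.card_univ, Fintype.card_fin]
  set D := Finset.univ.filter (fun c : Fin a => r0 c ∈ S1) with hD
  set E := Finset.univ.filter (fun c : Fin a => r1 c ∈ S0) with hE
  have hDim : D.image r0 = S0 ∩ S1 := by
    ext ℓ
    simp only [hD, hS0, Finset.mem_image, Finset.mem_inter, Finset.mem_filter,
      Finset.mem_univ, true_and]
    constructor
    · rintro ⟨c, hc1, rfl⟩
      exact ⟨⟨c, rfl⟩, hc1⟩
    · rintro ⟨⟨c, rfl⟩, h1⟩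
      exact ⟨c, h1, rfl⟩
  have hEim : E.image r1 = S0 ∩ S1 := by
    ext ℓ
    simp only [hE, hS1, Finset.mem_image, Finset.mem_inter, Finset.mem_filter,
      Finset.mem_univ, true_and]
    constructor
    · rintro ⟨c, hc1, rfl⟩
      exact ⟨hc1, ⟨c, rfl⟩⟩
    · rintro ⟨h1, c, rfl⟩
      exact ⟨c, h1, rfl⟩
  have hDcard : D.card = (S0 ∩ S1).card := by
    rw [← hDim, Finset.card_image_of_injective _ inj0]
  have hEcard : E.card = (S0 ∩ S1).card := by
    rw [← hEim, Finset.card_image_of_injective _ inj1]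
  have hdisj : Disjoint D E := by
    rw [Finset.disjoint_left]
    intro c hcD hcE
    simp only [hD, hE, hS0, hS1, Finset.mem_filter, Finset.mem_univ, true_and,
      Finset.mem_image] at hcD hcE
    obtain ⟨j', hj'⟩ := hcD  -- f (j',1) = f (c,0)
    obtain ⟨i', hi'⟩ := hcE  -- f (i',0) = f (c,1)
    have hne := hcol c
    rcases lt_or_gt_of_ne hne with hlt | hgt
    · -- f(c,0) < f(c,1): path (i',0)-(c,0)-(c,1)
      have hic : i' ≠ c := by
        intro hh
        rw [hh] at hi'
        exact hne hi'
      have h1 : (KaK2 a).Adj (i', 0) (c, 0) := kak2_adj.mpr (Or.inl ⟨hic, rfl⟩)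
      have h2 : (KaK2 a).Adj (c, (0 : Fin 2)) (c, 1) := kak2_adj.mpr (Or.inr ⟨by simp, rfl⟩)
      have hends : ((i', 0) : Fin a × Fin 2) ≠ (c, 1) := by
        intro h
        have := congrArg Prod.snd h
        simp at this
      have := mid hf h1 h2 hends hi'
      simp only [hr0, hr1] at *
      omega
    · -- f(c,1) < f(c,0): path (c,0)-(c,1)-(j',1)
      have hjc : j' ≠ c := by
        intro hh
        rw [hh] at hj'
        exact hne hj'.symm
      have h1 : (KaK2 a).Adj (c, (0 : Fin 2)) (c, 1) := kak2_adj.mpr (Or.inr ⟨by simp, rfl⟩)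
      have h2 : (KaK2 a).Adj (c, 1) (j', 1) := kak2_adj.mpr (Or.inl ⟨Ne.symm hjc, rfl⟩)
      have hends : ((c, 0) : Fin a × Fin 2) ≠ (j', 1) := by
        intro h
        have := congrArg Prod.snd h
        simp at this
      have := mid hf h1 h2 hends hj'.symm
      simp only [hr0, hr1] at *
      omega
  have hDE : D.card + E.card ≤ a := by
    rw [← Finset.card_union_of_disjoint hdisj]
    calc (D ∪ E).card ≤ Finset.univ.card := Finset.card_le_univ _
    _ = a := by rw [Finset.card_univ, Fintype.card_fin]
  have hsub : S0 ∪ S1 ⊆ Finset.Icc 1 k := by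
    intro ℓ hℓ
    rw [Finset.mem_Icc]
    rcases Finset.mem_union.mp hℓ with h | h <;>
    · obtain ⟨c, _, rfl⟩ := Finset.mem_image.mp h
      exact hf.1 _
  have hunion : (S0 ∪ S1).card ≤ k := by
    calc (S0 ∪ S1).card ≤ (Finset.Icc 1 k).card := Finset.card_le_card hsub
    _ = k := by rw [Nat.card_Icc]; omega
  have hcards : (S0 ∪ S1).card + (S0 ∩ S1).card = S0.card + S1.card :=
    Finset.card_union_add_card_inter S0 S1
  omega

end TDAux

/-- For every positive integer `a`, the graph `K_a □ K_2` has tree-depth exactly `⌈3a/2⌉`. -/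
theorem treedepth_KaK2 (a : ℕ) (ha : 1 ≤ a) : treedepth (KaK2 a) = (3 * a + 1) / 2 := by
  have hmem : (3 * a + 1) / 2 ∈ {k | ∃ f, IsRanking (KaK2 a) k f} :=
    ⟨TDAux.rk a, TDAux.rk_isRanking a⟩
  refine le_antisymm (Nat.sInf_le hmem) ?_
  refine le_csInf ⟨_, hmem⟩ ?_
  rintro k ⟨f, hf⟩
  exact TDAux.lower hf
end

section
/- For every integer a ≥ 3 and every vertex cutset T of K_a □ K_2, the graph obtained by deleting T has a connected component C with 2·|C| ≥ 2a − |T|, i.e., a component with at least a − |T|/2 vertices. -/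
/-- For `a ≥ 3` and any vertex cutset `T` of `K_a □ K_2`, deleting `T` leaves a connected
component `C` with `2·|C| ≥ 2a − |T|`, i.e. a component with at least `a − |T|/2` vertices. -/
theorem big_component_after_cutset (a : ℕ) (ha : 3 ≤ a) (T : Finset (Fin a × Fin 2))
    (hT : ¬ ((KaK2 a).induce ((↑T : Set (Fin a × Fin 2)))ᶜ).Preconnected) :
    ∃ C : ((KaK2 a).induce ((↑T : Set (Fin a × Fin 2)))ᶜ).ConnectedComponent,
      2 * a - T.card ≤ 2 * C.supp.ncard := by
  set G := (KaK2 a).induce ((↑T : Set (Fin a × Fin 2)))ᶜ with hG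
  rw [SimpleGraph.Preconnected] at hT
  push_neg at hT
  obtain ⟨u, v, huv⟩ := hT
  -- two surviving vertices sharing a coordinate are reachable
  have adj_of_ne : ∀ w x : ((↑T : Set (Fin a × Fin 2))ᶜ : Set _),
      (w : Fin a × Fin 2).2 = (x : Fin a × Fin 2).2 → G.Reachable w x := by
    intro w x h2
    by_cases h1 : (w : Fin a × Fin 2).1 = (x : Fin a × Fin 2).1
    · have : w = x := Subtype.ext (Prod.ext h1 h2)
      exact this ▸ SimpleGraph.Reachable.refl w
    · apply SimpleGraph.Adj.reachable
      show (KaK2 a).Adj w x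
      rw [KaK2, SimpleGraph.boxProd_adj]
      exact Or.inl ⟨h1, h2⟩
  have hne2 : (u : Fin a × Fin 2).2 ≠ (v : Fin a × Fin 2).2 := fun h => huv (adj_of_ne u v h)
  -- every surviving vertex is in u's or v's component
  set Cu := G.connectedComponentMk u with hCu
  set Cv := G.connectedComponentMk v with hCv
  have hcover : Cu.supp ∪ Cv.supp = Set.univ := by
    ext w
    simp only [Set.mem_union, SimpleGraph.ConnectedComponent.mem_supp_iff, Set.mem_univ,
      iff_true]
    have : (w : Fin a × Fin 2).2 = (u : Fin a × Fin 2).2 ∨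
        (w : Fin a × Fin 2).2 = (v : Fin a × Fin 2).2 := by
      revert hne2; generalize (u : Fin a × Fin 2).2 = x
      generalize (v : Fin a × Fin 2).2 = y; generalize (w : Fin a × Fin 2).2 = z
      revert x y z; decide
    rcases this with h | h
    · exact Or.inl (SimpleGraph.ConnectedComponent.sound (adj_of_ne w u h))
    · exact Or.inr (SimpleGraph.ConnectedComponent.sound (adj_of_ne w v h))
  have hdisj : Disjoint Cu.supp Cv.supp := by
    rw [Set.disjoint_left]
    intro w hwu hwv
    rw [SimpleGraph.ConnectedComponent.mem_supp_iff] at hwu hwv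
    exact huv (SimpleGraph.ConnectedComponent.exact (hwu.symm.trans hwv))
  -- cardinalities
  have hsum : Cu.supp.ncard + Cv.supp.ncard = Nat.card ((↑T : Set (Fin a × Fin 2))ᶜ : Set _) := by
    rw [← Set.ncard_union_eq hdisj (Set.toFinite _) (Set.toFinite _), hcover, Set.ncard_univ]
  have hcard : Nat.card ((↑T : Set (Fin a × Fin 2))ᶜ : Set _) + T.card = 2 * a := by
    have h1 : Nat.card ((↑T : Set (Fin a × Fin 2))ᶜ : Set _)
        = ((↑T : Set (Fin a × Fin 2))ᶜ).ncard := (Nat.card_coe_set_eq _).symm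
    have h2 : ((↑T : Set (Fin a × Fin 2))ᶜ).ncard + (↑T : Set (Fin a × Fin 2)).ncard
        = Nat.card (Fin a × Fin 2) := by
      rw [← Set.ncard_union_eq disjoint_compl_left (Set.toFinite _) (Set.toFinite _),
        Set.compl_union_self, Set.ncard_univ]
    have h3 : Nat.card (Fin a × Fin 2) = 2 * a := by simp [Nat.card_eq_fintype_card]; ring
    rw [h1, ← Set.ncard_coe_finset T]
    omega
  rcases le_total Cu.supp.ncard Cv.supp.ncard with h | h
  · exact ⟨Cv, by omega⟩
  · exact ⟨Cu, by omega⟩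
end

section
/- For every integer n ≥ 3, the graph H_n has tree-depth at most n+1. -/
/-- The graph `H_n`, obtained from `K_n` by subdividing once every edge incident to a fixed
vertex `v`.  Here `none` is `v`, `some (Sum.inl i)` is the degree-2 subdivision vertex
`a_{i+1}`, and `some (Sum.inr i)` is the vertex `b_{i+1}` of the clique on `B_n`. -/
def Hgraph (n : ℕ) : SimpleGraph (Option (Fin (n - 1) ⊕ Fin (n - 1))) :=
  SimpleGraph.fromRel (fun x y =>
    (∃ i : Fin (n - 1), x = none ∧ y = some (Sum.inl i)) ∨
    (∃ i : Fin (n - 1), x = some (Sum.inl i) ∧ y = some (Sum.inr i)) ∨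
    (∃ i j : Fin (n - 1), x = some (Sum.inr i) ∧ y = some (Sum.inr j)))

/-- For every `n ≥ 3`, the graph `H_n` has tree-depth at most `n + 1`. -/
theorem treedepth_Hgraph_le (n : ℕ) (hn : 3 ≤ n) : treedepth (Hgraph n) ≤ n + 1 := by
  apply Nat.sInf_le
  refine ⟨fun x => match x with
    | none => n + 1
    | some (Sum.inl _) => 1
    | some (Sum.inr i) => (i : ℕ) + 2, ?_, ?_⟩
  · rintro (_ | (i | i)) <;> simp
    have := i.isLt; omega
  · intro u w p hp hne hf
    match u, w with
    | none, none => exact absurd rfl hne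
    | none, some (Sum.inl j) => simp at hf; omega
    | none, some (Sum.inr j) => have := j.isLt; simp at hf; omega
    | some (Sum.inl i), none => simp at hf; omega
    | some (Sum.inr i), none => have := i.isLt; simp at hf; omega
    | some (Sum.inl i), some (Sum.inr j) => have := j.isLt; simp at hf
    | some (Sum.inr i), some (Sum.inl j) => have := i.isLt; simp at hf
    | some (Sum.inr i), some (Sum.inr j) =>
      simp at hf
      exact absurd (by simp [Fin.ext_iff, hf]) hne
    | some (Sum.inl i), some (Sum.inl j) =>
      cases p with
      | nil => exact absurd rfl hne
      | cons h q =>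
        rename_i x
        refine ⟨x, by simp [SimpleGraph.Walk.support_cons, q.start_mem_support], ?_, ?_, ?_⟩
        · exact h.ne'
        · rintro rfl
          simp [Hgraph, SimpleGraph.fromRel_adj] at h
        · simp only [Hgraph, SimpleGraph.fromRel_adj] at h
          obtain ⟨hne', hrel⟩ := h
          match x with
          | none => simp; omega
          | some (Sum.inl k) =>
            exfalso
            rcases hrel with (⟨a,h1,h2⟩|⟨a,h1,h2⟩|⟨a,b,h1,h2⟩)|(⟨a,h1,h2⟩|⟨a,h1,h2⟩|⟨a,b,h1,h2⟩) <;> simp_all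
          | some (Sum.inr k) => simp
end

section
/- For every integer n ≥ 3, the graph H_n has tree-depth at least n+1. -/
open SimpleGraph
lemma ranking_adj_ne {V : Type*} {G : SimpleGraph V} {k : ℕ} {f : V → ℕ}
    (h : IsRanking G k f) {u w : V} (ha : G.Adj u w) : f u ≠ f w := by
  intro heq
  obtain ⟨x, hx, hxu, hxw, _⟩ := h.2 (Walk.cons ha Walk.nil)
    (by simp [Walk.isPath_def, ha.ne]) ha.ne heq
  simp [Walk.support_cons] at hx
  rcases hx with rfl | rfl
  · exact hxu rfl
  · exact hxw rfl

lemma ranking_mid {V : Type*} {G : SimpleGraph V} {k : ℕ} {f : V → ℕ}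
    (h : IsRanking G k f) {u m w : V} (h1 : G.Adj u m) (h2 : G.Adj m w)
    (huw : u ≠ w) (heq : f u = f w) : f u < f m := by
  obtain ⟨x, hx, hxu, hxw, hlt⟩ := h.2 (Walk.cons h1 (Walk.cons h2 Walk.nil))
    (by simp [Walk.isPath_def, h1.ne, h2.ne, huw]) huw heq
  simp [Walk.support_cons] at hx
  rcases hx with rfl | rfl | rfl
  · exact absurd rfl hxu
  · exact hlt
  · exact absurd rfl hxw

lemma Hgraph_adj_vA (n : ℕ) (i : Fin (n-1)) :
    (Hgraph n).Adj none (some (Sum.inl i)) := by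
  rw [Hgraph, SimpleGraph.fromRel_adj]
  exact ⟨by simp, Or.inl (Or.inl ⟨i, rfl, rfl⟩)⟩

lemma Hgraph_adj_AB (n : ℕ) (i : Fin (n-1)) :
    (Hgraph n).Adj (some (Sum.inl i)) (some (Sum.inr i)) := by
  rw [Hgraph, SimpleGraph.fromRel_adj]
  exact ⟨by simp, Or.inl (Or.inr (Or.inl ⟨i, rfl, rfl⟩))⟩

lemma Hgraph_adj_BB (n : ℕ) {i j : Fin (n-1)} (h : i ≠ j) :
    (Hgraph n).Adj (some (Sum.inr i)) (some (Sum.inr j)) := by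
  rw [Hgraph, SimpleGraph.fromRel_adj]
  exact ⟨by simp [h], Or.inl (Or.inr (Or.inr ⟨i, j, rfl, rfl⟩))⟩

/-- For every `n ≥ 3`, the graph `H_n` has tree-depth at least `n + 1`. -/
theorem treedepth_Hgraph_ge (n : ℕ) (hn : 3 ≤ n) : n + 1 ≤ treedepth (Hgraph n) := by
  classical
  have hNE : {k | ∃ f, IsRanking (Hgraph n) k f}.Nonempty := by
    refine ⟨Fintype.card (Option (Fin (n-1) ⊕ Fin (n-1))),
      fun x => (Fintype.equivFin _ x : ℕ) + 1, ?_, ?_⟩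
    · intro x
      exact ⟨Nat.le_add_left 1 _, Nat.succ_le_of_lt (Fin.is_lt _)⟩
    · intro u w p hp hne heq
      exact absurd ((Fintype.equivFin _).injective (Fin.val_injective
        (Nat.succ_injective heq))) hne
  rw [treedepth]
  by_contra hlt
  push_neg at hlt
  have hle : sInf {k | ∃ f, IsRanking (Hgraph n) k f} ≤ n := Nat.lt_succ_iff.mp hlt
  obtain ⟨f, hf⟩ := Nat.sInf_mem hNE
  have hbd : ∀ x : Option (Fin (n-1) ⊕ Fin (n-1)), f x ∈ Finset.Icc 1 n := by
    intro x
    have h := hf.1 x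
    exact Finset.mem_Icc.mpr ⟨h.1, le_trans h.2 hle⟩
  -- basic edge constraints
  have hvAne : ∀ i : Fin (n-1), f none ≠ f (some (Sum.inl i)) :=
    fun i => ranking_adj_ne hf (Hgraph_adj_vA n i)
  have hABne : ∀ i : Fin (n-1), f (some (Sum.inl i)) ≠ f (some (Sum.inr i)) :=
    fun i => ranking_adj_ne hf (Hgraph_adj_AB n i)
  have hBBne : ∀ i j : Fin (n-1), i ≠ j → f (some (Sum.inr i)) ≠ f (some (Sum.inr j)) :=
    fun i j h => ranking_adj_ne hf (Hgraph_adj_BB n h)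
  -- rule 3
  have h3 : ∀ i k : Fin (n-1), i ≠ k → f (some (Sum.inl i)) = f (some (Sum.inr k)) →
      f (some (Sum.inl i)) < f (some (Sum.inr i)) := by
    intro i k hik heq
    exact ranking_mid hf (Hgraph_adj_AB n i) (Hgraph_adj_BB n hik) (by simp) heq
  -- rule 4
  have h4 : ∀ j : Fin (n-1), f none = f (some (Sum.inr j)) →
      f none < f (some (Sum.inl j)) := by
    intro j heq
    exact ranking_mid hf (Hgraph_adj_vA n j) (Hgraph_adj_AB n j) (by simp) heq
  -- rule 5
  have h5 : ∀ i j : Fin (n-1), i ≠ j → f (some (Sum.inl i)) = f (some (Sum.inl j)) →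
      f (some (Sum.inl i)) < f none := by
    intro i j hij heq
    exact ranking_mid hf (Hgraph_adj_vA n i).symm (Hgraph_adj_vA n j) (by simp [hij]) heq
  -- labels on the clique
  have hginj : Function.Injective (fun i : Fin (n-1) => f (some (Sum.inr i))) := by
    intro i j h
    by_contra hij
    exact hBBne i j hij h
  set img := Finset.image (fun i : Fin (n-1) => f (some (Sum.inr i))) Finset.univ with himg
  have himgcard : img.card = n - 1 := by
    rw [himg, Finset.card_image_of_injective _ hginj, Finset.card_univ, Fintype.card_fin]
  have himgsub : img ⊆ Finset.Icc 1 n := by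
    intro x hx
    obtain ⟨i, -, rfl⟩ := Finset.mem_image.mp hx
    exact hbd _
  have hTcard : (Finset.Icc 1 n \ img).card = 1 := by
    rw [Finset.card_sdiff_of_subset himgsub, himgcard, Nat.card_Icc]
    omega
  have hTuniq : ∀ x ∈ Finset.Icc 1 n \ img, ∀ y ∈ Finset.Icc 1 n \ img, x = y :=
    Finset.card_le_one.mp (le_of_eq hTcard)
  have hmemT : ∀ x : Option (Fin (n-1) ⊕ Fin (n-1)), f x ∉ img →
      f x ∈ Finset.Icc 1 n \ img := by
    intro x hx
    exact Finset.mem_sdiff.mpr ⟨hbd x, hx⟩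
  -- minimum of the clique labels
  have hne1 : (Finset.univ : Finset (Fin (n-1))).Nonempty := by
    rw [Finset.univ_nonempty_iff]
    exact ⟨⟨0, by omega⟩⟩
  obtain ⟨i₀, -, hi₀min⟩ :=
    Finset.exists_min_image Finset.univ (fun i : Fin (n-1) => f (some (Sum.inr i))) hne1
  simp only [Finset.mem_univ, forall_const] at hi₀min
  -- step 1: f (A i₀) is not a clique label
  have hAi₀ : f (some (Sum.inl i₀)) ∈ Finset.Icc 1 n \ img := by
    apply hmemT
    intro hmem
    obtain ⟨k, -, hk⟩ := Finset.mem_image.mp hmem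
    rcases eq_or_ne i₀ k with rfl | hik
    · exact hABne i₀ hk.symm
    · have h1 := h3 i₀ k hik hk.symm
      have h2 := hi₀min k
      omega
  -- step 2: f vv is a clique label
  have hvimg : f (none : Option (Fin (n-1) ⊕ Fin (n-1))) ∈ img := by
    by_contra hv
    exact hvAne i₀ (hTuniq _ (hmemT none hv) _ hAi₀)
  obtain ⟨j, -, hj⟩ := Finset.mem_image.mp hvimg
  -- step 3
  have hvAj : f (none : Option (Fin (n-1) ⊕ Fin (n-1))) < f (some (Sum.inl j)) :=
    h4 j hj.symm
  have hAj : f (some (Sum.inl j)) ∈ Finset.Icc 1 n \ img := by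
    apply hmemT
    intro hmem
    obtain ⟨k, -, hk⟩ := Finset.mem_image.mp hmem
    rcases eq_or_ne j k with rfl | hjk
    · exact hABne j hk.symm
    · have h1 := h3 j k hjk hk.symm
      omega
  have hAjAi₀ : f (some (Sum.inl j)) = f (some (Sum.inl i₀)) := hTuniq _ hAj _ hAi₀
  -- step 4: j = i₀
  have hji₀ : j = i₀ := by
    by_contra hji
    have := h5 j i₀ hji hAjAi₀
    omega
  subst hji₀
  -- step 5: second minimum of the clique labels
  have hne2 : ((Finset.univ : Finset (Fin (n-1))).erase j).Nonempty := by
    rw [← Finset.card_pos, Finset.card_erase_of_mem (Finset.mem_univ j),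
      Finset.card_univ, Fintype.card_fin]
    omega
  obtain ⟨i₁, hi₁mem, hi₁min⟩ :=
    Finset.exists_min_image _ (fun i : Fin (n-1) => f (some (Sum.inr i))) hne2
  have hi₁j : i₁ ≠ j := (Finset.mem_erase.mp hi₁mem).1
  -- f (A i₁) can be nowhere
  by_cases hc : f (some (Sum.inl i₁)) ∈ img
  · obtain ⟨k, -, hk⟩ := Finset.mem_image.mp hc
    rcases eq_or_ne k i₁ with rfl | hki₁
    · exact hABne k hk.symm
    · rcases eq_or_ne k j with rfl | hkj
      · exact hvAne i₁ (hj.symm.trans hk)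
      · have h1 := h3 i₁ k (Ne.symm hki₁) hk.symm
        have h2 := hi₁min k (Finset.mem_erase.mpr ⟨hkj, Finset.mem_univ k⟩)
        omega
  · have hAi₁ : f (some (Sum.inl i₁)) = f (some (Sum.inl j)) :=
      hTuniq _ (hmemT _ hc) _ hAi₀
    have := h5 i₁ j hi₁j hAi₁
    omega
end

section
/- For every integer n ≥ 3 and every index i with 1 ≤ i ≤ n−1, the graph obtained from H_n by deleting the edge v a_i has tree-depth at most n. -/
def Gdel (n : ℕ) (i : Fin (n - 1)) : SimpleGraph (Option (Fin (n - 1) ⊕ Fin (n - 1))) :=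
  (Hgraph n).deleteEdges {s((none : Option (Fin (n - 1) ⊕ Fin (n - 1))), some (Sum.inl i))}
lemma adj_none {n : ℕ} {i : Fin (n-1)} {x : Option (Fin (n-1) ⊕ Fin (n-1))}
    (h : (Gdel n i).Adj none x) : ∃ j : Fin (n-1), j ≠ i ∧ x = some (Sum.inl j) := by
  obtain ⟨h1, h2⟩ := h
  simp only [SimpleGraph.fromEdgeSet_adj, Set.mem_singleton_iff, not_and, not_ne_iff] at h2
  rw [Hgraph, SimpleGraph.fromRel_adj] at h1
  obtain ⟨hne, hrel⟩ := h1
  rcases hrel with (⟨j, _, hj⟩ | ⟨j, hj, _⟩ | ⟨j, k, hj, _⟩) | (⟨j, hj, hk⟩ | ⟨j, hj, _⟩ | ⟨j, k, hj, _⟩)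
  · subst hj
    refine ⟨j, fun hji => ?_, rfl⟩
    subst hji
    exact hne (h2 rfl)
  all_goals exfalso; simp_all

lemma adj_a {n : ℕ} {i : Fin (n-1)} {j : Fin (n-1)} {x : Option (Fin (n-1) ⊕ Fin (n-1))}
    (h : (Gdel n i).Adj (some (Sum.inl j)) x) : x = none ∨ x = some (Sum.inr j) := by
  obtain ⟨h1, h2⟩ := h
  rw [Hgraph, SimpleGraph.fromRel_adj] at h1
  obtain ⟨hne, hrel⟩ := h1
  rcases hrel with (⟨k, hk, _⟩ | ⟨k, hk, hx⟩ | ⟨k, l, hk, _⟩) | (⟨k, hk, hx⟩ | ⟨k, hx, hk⟩ | ⟨k, l, _, hk⟩) <;>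
    simp_all

def fRank (n : ℕ) (i : Fin (n - 1)) : Option (Fin (n - 1) ⊕ Fin (n - 1)) → ℕ
  | none => 2
  | some (Sum.inl _) => 1
  | some (Sum.inr j) => if j = i then 2 else if j.val < i.val then j.val + 3 else j.val + 2

lemma fRank_bounds {n : ℕ} (hn : 3 ≤ n) (i : Fin (n-1)) (x : Option (Fin (n-1) ⊕ Fin (n-1))) :
    1 ≤ fRank n i x ∧ fRank n i x ≤ n := by
  rcases x with _ | (j | j)
  · simp [fRank]; omega
  · simp [fRank]; omega
  · have hj := j.isLt
    have hi := i.isLt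
    simp only [fRank]
    split_ifs <;> omega

lemma fRank_b_ge {n : ℕ} {i j : Fin (n-1)} (h : j ≠ i) :
    3 ≤ fRank n i (some (Sum.inr j)) := by
  simp only [fRank, if_neg h]
  split_ifs <;> omega

lemma eq_label {n : ℕ} {i : Fin (n-1)} {u w : Option (Fin (n-1) ⊕ Fin (n-1))}
    (hne : u ≠ w) (hf : fRank n i u = fRank n i w) :
    (∃ j k : Fin (n-1), u = some (Sum.inl j) ∧ w = some (Sum.inl k)) ∨
    (u = none ∧ w = some (Sum.inr i)) ∨ (u = some (Sum.inr i) ∧ w = none) := by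
  rcases u with _ | (j | j) <;> rcases w with _ | (k | k)
  · exact absurd rfl hne
  · simp [fRank] at hf
  · by_cases hk : k = i
    · subst hk; right; left; exact ⟨rfl, rfl⟩
    · exact absurd hf (by
        have := fRank_b_ge (n := n) (i := i) hk
        have e : fRank n i (none : Option (Fin (n-1) ⊕ Fin (n-1))) = 2 := rfl
        omega)
  · simp [fRank] at hf
  · exact Or.inl ⟨j, k, rfl, rfl⟩
  · exact absurd hf (by
      have e : fRank n i (some (Sum.inl j)) = 1 := rfl
      by_cases hk : k = i
      · have e2 : fRank n i (some (Sum.inr i)) = 2 := by simp [fRank]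
        subst hk; omega
      · have := fRank_b_ge (n := n) (i := i) hk; omega)
  · by_cases hj : j = i
    · subst hj; right; right; exact ⟨rfl, rfl⟩
    · exact absurd hf (by
        have := fRank_b_ge (n := n) (i := i) hj
        have e : fRank n i (none : Option (Fin (n-1) ⊕ Fin (n-1))) = 2 := rfl
        omega)
  · exact absurd hf (by
      have e : fRank n i (some (Sum.inl k)) = 1 := rfl
      by_cases hj : j = i
      · have e2 : fRank n i (some (Sum.inr i)) = 2 := by simp [fRank]
        subst hj; omega
      · have := fRank_b_ge (n := n) (i := i) hj; omega)
  · -- both inr: injective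
    exfalso
    apply hne
    have hj := j.isLt; have hk := k.isLt
    simp only [fRank] at hf
    congr 2
    split_ifs at hf with h1 h2 h3 h4 h5 h6 h7 <;>
      first
      | (subst h1; first | (exact (by omega : i = k)) | omega)
      | (try subst h2) <;> (try subst h3) <;>
        (first | exact Fin.ext (by omega) | omega)

lemma key_walk {n : ℕ} {i : Fin (n-1)}
    (p : (Gdel n i).Walk none (some (Sum.inr i))) (hp : p.IsPath) :
    ∃ x ∈ p.support, x ≠ none ∧ x ≠ some (Sum.inr i) ∧ 2 < fRank n i x := by
  cases p with
  | cons h1 q =>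
    obtain ⟨j, hji, rfl⟩ := adj_none h1
    cases q with
    | cons h2 r =>
      rcases adj_a h2 with rfl | rfl
      · -- second vertex none: contradicts path
        exfalso
        rw [SimpleGraph.Walk.cons_isPath_iff] at hp
        exact hp.2 (by simp [SimpleGraph.Walk.support_cons, r.start_mem_support])
      · refine ⟨some (Sum.inr j), ?_, by simp, by simp [hji], ?_⟩
        · simp only [SimpleGraph.Walk.support_cons, List.mem_cons]
          exact Or.inr (Or.inr r.start_mem_support)
        · have := fRank_b_ge (n := n) (i := i) hji
          omega

lemma fRank_b_ge2 {n : ℕ} (i j : Fin (n-1)) : 2 ≤ fRank n i (some (Sum.inr j)) := by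
  by_cases h : j = i
  · subst h; simp [fRank]
  · have := fRank_b_ge (n := n) (i := i) h; omega


/-- For `n ≥ 3` and any `i`, deleting the edge `v a_i` from `H_n` yields a graph of
tree-depth at most `n`. -/
theorem treedepth_deleteEdge_va (n : ℕ) (hn : 3 ≤ n) (i : Fin (n - 1)) :
    treedepth ((Hgraph n).deleteEdges {s((none : Option (Fin (n - 1) ⊕ Fin (n - 1))),
      some (Sum.inl i))}) ≤ n := by
  show treedepth (Gdel n i) ≤ n
  have hr : IsRanking (Gdel n i) n (fRank n i) := by
    constructor
    · exact fun v => fRank_bounds hn i v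
    · intro u w p hp huw hf
      rcases eq_label huw hf with ⟨j, k, rfl, rfl⟩ | ⟨rfl, rfl⟩ | ⟨rfl, rfl⟩
      · cases p with
        | nil => exact absurd rfl huw
        | cons h q =>
          rcases adj_a h with rfl | rfl
          · refine ⟨none, ?_, by simp, by simp, ?_⟩
            · simp only [SimpleGraph.Walk.support_cons, List.mem_cons]
              exact Or.inr q.start_mem_support
            · show fRank n i (some (Sum.inl j)) < fRank n i none
              simp [fRank]
          · refine ⟨some (Sum.inr j), ?_, by simp, by simp, ?_⟩
            · simp only [SimpleGraph.Walk.support_cons, List.mem_cons]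
              exact Or.inr q.start_mem_support
            · have := fRank_b_ge2 i j
              have e : fRank n i (some (Sum.inl j)) = 1 := rfl
              omega
      · obtain ⟨x, hx, hx1, hx2, hx3⟩ := key_walk p hp
        have e : fRank n i (none : Option (Fin (n-1) ⊕ Fin (n-1))) = 2 := rfl
        exact ⟨x, hx, hx1, hx2, by omega⟩
      · obtain ⟨x, hx, hx1, hx2, hx3⟩ := key_walk p.reverse hp.reverse
        have e : fRank n i (some (Sum.inr i)) = 2 := by simp [fRank]
        refine ⟨x, ?_, hx2, hx1, by omega⟩
        rwa [SimpleGraph.Walk.support_reverse, List.mem_reverse] at hx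
  exact Nat.sInf_le ⟨fRank n i, hr⟩
end

section
/- For every integer n ≥ 3 and every index i with 1 ≤ i ≤ n−1, the graph obtained from H_n by deleting the edge a_i b_i has tree-depth at most n. -/
def rk (n : ℕ) (i : Fin (n - 1)) : Option (Fin (n - 1) ⊕ Fin (n - 1)) → ℕ
  | none => n
  | some (Sum.inl _) => 1
  | some (Sum.inr j) => if j = i then 1 else if (j : ℕ) < (i : ℕ) then (j : ℕ) + 2 else (j : ℕ) + 1

lemma rk_inj (n : ℕ) (hn : 3 ≤ n) (i : Fin (n - 1)) {x y : Option (Fin (n - 1) ⊕ Fin (n - 1))}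
    (hx : 2 ≤ rk n i x) (h : rk n i x = rk n i y) : x = y := by
  have hi : (i : ℕ) < n - 1 := i.isLt
  match x, y with
  | none, none => rfl
  | none, some (Sum.inl j) => simp [rk] at h; omega
  | none, some (Sum.inr j) =>
      have hj : (j : ℕ) < n - 1 := j.isLt
      simp only [rk] at h; split_ifs at h <;> omega
  | some (Sum.inl j), _ => simp [rk] at hx
  | some (Sum.inr j), none =>
      have hj : (j : ℕ) < n - 1 := j.isLt
      simp only [rk] at h hx; split_ifs at h hx <;> omega
  | some (Sum.inr j), some (Sum.inl k) =>
      simp only [rk] at h hx; split_ifs at h hx <;> omega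
  | some (Sum.inr j), some (Sum.inr k) =>
      have hjk : j = k := by
        have hj : (j : ℕ) < n - 1 := j.isLt
        have hk : (k : ℕ) < n - 1 := k.isLt
        have hji : j = i ↔ (j : ℕ) = (i : ℕ) := Fin.ext_iff
        have hki : k = i ↔ (k : ℕ) = (i : ℕ) := Fin.ext_iff
        have : (j : ℕ) = (k : ℕ) := by
          simp only [rk] at h hx
          split_ifs at h hx <;> omega
        exact Fin.ext this
      rw [hjk]

lemma rk_adj (n : ℕ) (hn : 3 ≤ n) (i : Fin (n - 1))
    {x y : Option (Fin (n - 1) ⊕ Fin (n - 1))}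
    (h : ((Hgraph n).deleteEdges
      {s((some (Sum.inl i) : Option (Fin (n - 1) ⊕ Fin (n - 1))), some (Sum.inr i))}).Adj x y)
    (hx : rk n i x = 1) : 1 < rk n i y := by
  rw [SimpleGraph.deleteEdges_adj] at h
  obtain ⟨hadj, hne⟩ := h
  rw [Hgraph, SimpleGraph.fromRel_adj] at hadj
  obtain ⟨hxy, hrel⟩ := hadj
  simp only [Set.mem_singleton_iff, Sym2.eq_iff] at hne
  rcases hrel with (⟨j, rfl, rfl⟩ | ⟨j, rfl, rfl⟩ | ⟨j, k, rfl, rfl⟩) |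
      (⟨j, rfl, rfl⟩ | ⟨j, rfl, rfl⟩ | ⟨j, k, rfl, rfl⟩)
  · -- x = none, y = a_j : impossible since rk none = n ≥ 3
    simp only [rk] at hx; omega
  · -- x = a_j, y = b_j : j ≠ i from the deleted edge
    have hji : j ≠ i := by
      intro hh; subst hh; exact hne (Or.inl ⟨rfl, rfl⟩)
    simp only [rk, if_neg hji]
    split_ifs <;> omega
  · -- x = b_j, y = b_k
    have hji : j = i := by
      simp only [rk] at hx
      split_ifs at hx with h1 h2 <;> first | exact h1 | omega
    have hki : k ≠ i := by
      intro hh; exact hxy (by rw [hji, hh])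
    simp only [rk, if_neg hki]
    split_ifs <;> omega
  · -- y = none, x = a_j
    simp only [rk]; omega
  · -- y = a_j, x = b_j : rk x = 1 forces j = i, but then edge was deleted
    exfalso
    have hji : j = i := by
      simp only [rk] at hx
      split_ifs at hx with h1 h2 <;> first | exact h1 | omega
    subst hji
    exact hne (Or.inr ⟨rfl, rfl⟩)
  · -- y = b_j, x = b_k
    have hki : k = i := by
      simp only [rk] at hx
      split_ifs at hx with h1 h2 <;> first | exact h1 | omega
    have hji : j ≠ i := by
      intro hh; exact hxy (by rw [hki, hh])
    simp only [rk, if_neg hji]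
    split_ifs <;> omega

/-- For `n ≥ 3` and any `i`, deleting the edge `a_i b_i` from `H_n` yields a graph of
tree-depth at most `n`. -/
theorem treedepth_deleteEdge_ab (n : ℕ) (hn : 3 ≤ n) (i : Fin (n - 1)) :
    treedepth ((Hgraph n).deleteEdges
      {s((some (Sum.inl i) : Option (Fin (n - 1) ⊕ Fin (n - 1))), some (Sum.inr i))}) ≤ n := by
  apply Nat.sInf_le
  refine ⟨rk n i, ?_, ?_⟩
  · rintro (_ | (j | j))
    · simp [rk]; omega
    · simp [rk]; omega
    · have := j.isLt
      have := i.isLt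
      simp only [rk]
      split_ifs <;> omega
  · intro u w p hp huw hfu
    rcases Nat.lt_or_ge (rk n i u) 2 with h1 | h2
    · -- rk u = 1, take second vertex
      have hu1 : rk n i u = 1 := by
        rcases Nat.lt_or_ge (rk n i u) 2 with _ | _
        · rcases u with (_ | (j | j)) <;> simp only [rk] at * <;> first | omega | (split_ifs at * <;> omega)
        · omega
      cases p with
      | nil => exact absurd rfl huw
      | @cons _ y _ h q =>
          refine ⟨y, ?_, ?_, ?_, ?_⟩
          · simp [SimpleGraph.Walk.support_cons]
          · exact h.ne'
          · intro hyw
            have := rk_adj n hn i h hu1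
            rw [hyw, ← hfu] at this
            omega
          · have := rk_adj n hn i h hu1
            omega
    · exact absurd (rk_inj n hn i h2 hfu) huw
end

section
/- For every integer n ≥ 3 and all indices i ≠ j with 1 ≤ i < j ≤ n−1, the graph obtained from H_n by deleting the edge b_i b_j has tree-depth at most n. -/
def lab (n : ℕ) (i j : Fin (n-1)) : Option (Fin (n-1) ⊕ Fin (n-1)) → ℕ
  | none => n
  | some (Sum.inl _) => 1
  | some (Sum.inr k) => if k = i ∨ k = j then 2
      else k.val + 3 - ((if i.val < k.val then 1 else 0) + (if j.val < k.val then 1 else 0))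

@[simp] lemma lab_none (n : ℕ) (i j : Fin (n-1)) : lab n i j none = n := rfl
@[simp] lemma lab_a (n : ℕ) (i j k : Fin (n-1)) : lab n i j (some (Sum.inl k)) = 1 := rfl

abbrev Gd (n : ℕ) (i j : Fin (n-1)) : SimpleGraph (Option (Fin (n - 1) ⊕ Fin (n - 1))) :=
  (Hgraph n).deleteEdges
      {s((some (Sum.inr i) : Option (Fin (n - 1) ⊕ Fin (n - 1))), some (Sum.inr j))}

lemma adj_inl {n : ℕ} {i j k : Fin (n-1)} {x} (h : (Gd n i j).Adj (some (Sum.inl k)) x) :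
    x = none ∨ x = some (Sum.inr k) := by
  obtain ⟨hadj, -⟩ := h
  rw [Hgraph, SimpleGraph.fromRel_adj] at hadj
  obtain ⟨hne, hr | hr⟩ := hadj
  · rcases hr with ⟨m, hm1, hm2⟩ | ⟨m, hm1, hm2⟩ | ⟨m, l, hm1, hm2⟩
    · exact absurd hm1 (by simp)
    · simp only [Option.some.injEq, Sum.inl.injEq] at hm1
      subst hm1; exact Or.inr hm2
    · exact absurd hm1 (by simp)
  · rcases hr with ⟨m, hm1, hm2⟩ | ⟨m, hm1, hm2⟩ | ⟨m, l, hm1, hm2⟩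
    · exact Or.inl hm1
    · exact absurd hm2 (by simp)
    · exact absurd hm2 (by simp)

lemma adj_bi {n : ℕ} {i j : Fin (n-1)} {x} (hij : i ≠ j)
    (h : (Gd n i j).Adj (some (Sum.inr i)) x) :
    x = some (Sum.inl i) ∨ ∃ m, m ≠ i ∧ m ≠ j ∧ x = some (Sum.inr m) := by
  simp only [Gd, SimpleGraph.deleteEdges_adj, Set.mem_singleton_iff] at h
  obtain ⟨hadj, hdel⟩ := h
  rw [Hgraph, SimpleGraph.fromRel_adj] at hadj
  obtain ⟨hne, hr | hr⟩ := hadj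
  · rcases hr with ⟨m, hm1, hm2⟩ | ⟨m, hm1, hm2⟩ | ⟨m, l, hm1, hm2⟩
    · exact absurd hm1 (by simp)
    · exact absurd hm1 (by simp)
    · simp only [Option.some.injEq, Sum.inr.injEq] at hm1
      subst hm1
      subst hm2
      refine Or.inr ⟨l, fun h => hne (by rw [h]), fun h => hdel (by rw [h]), rfl⟩
  · rcases hr with ⟨m, hm1, hm2⟩ | ⟨m, hm1, hm2⟩ | ⟨m, l, hm1, hm2⟩
    · exact absurd hm2 (by simp)
    · simp only [Option.some.injEq, Sum.inr.injEq] at hm2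
      subst hm2; exact Or.inl hm1
    · simp only [Option.some.injEq, Sum.inr.injEq] at hm2
      subst hm2
      subst hm1
      refine Or.inr ⟨m, fun h => hne (by rw [h]), ?_, rfl⟩
      rintro rfl
      exact hdel rfl

lemma lab_b_lt {n : ℕ} (hn : 3 ≤ n) {i j : Fin (n-1)} (hij : i ≠ j) (k : Fin (n-1)) :
    lab n i j (some (Sum.inr k)) < n := by
  have hi : i.val < n - 1 := i.isLt
  have hj : j.val < n - 1 := j.isLt
  have hk : k.val < n - 1 := k.isLt
  have hij' : i.val ≠ j.val := fun h => hij (Fin.ext h)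
  simp only [lab]
  split_ifs <;> omega

lemma lab_b_ge3 {n : ℕ} {i j k : Fin (n-1)} (hij : i ≠ j) (hki : k ≠ i) (hkj : k ≠ j) :
    3 ≤ lab n i j (some (Sum.inr k)) := by
  have hki' : i.val ≠ k.val := fun h => hki (Fin.ext h.symm)
  have hkj' : j.val ≠ k.val := fun h => hkj (Fin.ext h.symm)
  have hij' : i.val ≠ j.val := fun h => hij (Fin.ext h)
  simp only [lab, if_neg (by tauto : ¬(k = i ∨ k = j))]
  split_ifs <;> omega

lemma lab_b_ge2 {n : ℕ} {i j : Fin (n-1)} (hij : i ≠ j) (k : Fin (n-1)) :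
    2 ≤ lab n i j (some (Sum.inr k)) := by
  by_cases h : k = i ∨ k = j
  · simp [lab, h]
  · push_neg at h
    have := lab_b_ge3 (n := n) hij h.1 h.2
    omega

lemma lab_b_inj {n : ℕ} {i j k l : Fin (n-1)} (hij : i ≠ j) (hki : k ≠ i) (hkj : k ≠ j)
    (hli : l ≠ i) (hlj : l ≠ j)
    (h : lab n i j (some (Sum.inr k)) = lab n i j (some (Sum.inr l))) : k = l := by
  have hki' : i.val ≠ k.val := fun h => hki (Fin.ext h.symm)
  have hkj' : j.val ≠ k.val := fun h => hkj (Fin.ext h.symm)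
  have hli' : i.val ≠ l.val := fun h => hli (Fin.ext h.symm)
  have hlj' : j.val ≠ l.val := fun h => hlj (Fin.ext h.symm)
  have hij' : i.val ≠ j.val := fun h => hij (Fin.ext h)
  simp only [lab, if_neg (by tauto : ¬(k = i ∨ k = j)),
    if_neg (by tauto : ¬(l = i ∨ l = j))] at h
  apply Fin.ext
  split_ifs at h <;> omega

lemma key {n : ℕ} (hn : 3 ≤ n) {i j : Fin (n-1)} (hij : i ≠ j)
    (p : (Gd n i j).Walk (some (Sum.inr i)) (some (Sum.inr j)))
    (hp : p.IsPath) :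
    ∃ x ∈ p.support, x ≠ some (Sum.inr i) ∧ x ≠ some (Sum.inr j) ∧ 2 < lab n i j x := by
  cases p with
  | nil => exact (hij rfl).elim
  | cons h q =>
    rename_i x
    rcases adj_bi hij h with rfl | ⟨m, hmi, hmj, rfl⟩
    · -- first step to a_i; second step must be to none
      cases q with
      | cons h2 r =>
        rename_i y
        rcases adj_inl h2 with rfl | rfl
        · refine ⟨none, ?_, by simp, by simp, ?_⟩
          · rw [SimpleGraph.Walk.support_cons, SimpleGraph.Walk.support_cons]
            exact List.mem_cons_of_mem _ (List.mem_cons_of_mem _ r.start_mem_support)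
          · rw [lab_none]; omega
        · exfalso
          have hnd := hp.support_nodup
          rw [SimpleGraph.Walk.support_cons, SimpleGraph.Walk.support_cons] at hnd
          exact (List.nodup_cons.1 hnd).1
            (List.mem_cons_of_mem _ r.start_mem_support)
    · refine ⟨some (Sum.inr m), ?_, by simp [hmi], by simp [hmj], ?_⟩
      · rw [SimpleGraph.Walk.support_cons]
        exact List.mem_cons_of_mem _ q.start_mem_support
      · have := lab_b_ge3 (n := n) hij hmi hmj
        omega


/-- For `n ≥ 3` and distinct indices `i ≠ j`, deleting the edge `b_i b_j` from `H_n` yields a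
graph of tree-depth at most `n`. -/
theorem treedepth_deleteEdge_bb (n : ℕ) (hn : 3 ≤ n) (i j : Fin (n - 1)) (hij : i ≠ j) :
    treedepth ((Hgraph n).deleteEdges
      {s((some (Sum.inr i) : Option (Fin (n - 1) ⊕ Fin (n - 1))), some (Sum.inr j))}) ≤ n := by
  apply Nat.sInf_le
  refine ⟨lab n i j, ?_, ?_⟩
  · intro v
    match v with
    | none => rw [lab_none]; omega
    | some (Sum.inl k) => rw [lab_a]; omega
    | some (Sum.inr k) =>
        exact ⟨le_trans (by norm_num) (lab_b_ge2 hij k), le_of_lt (lab_b_lt hn hij k)⟩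
  · intro u w p hp huw hfw
    match u, w with
    | none, none => exact absurd rfl huw
    | none, some (Sum.inl k) =>
        exact absurd hfw (by rw [lab_none, lab_a]; omega)
    | some (Sum.inl k), none =>
        exact absurd hfw (by rw [lab_none, lab_a]; omega)
    | none, some (Sum.inr k) =>
        exact absurd hfw (by rw [lab_none]; have := lab_b_lt hn hij k; omega)
    | some (Sum.inr k), none =>
        exact absurd hfw (by rw [lab_none]; have := lab_b_lt hn hij k; omega)
    | some (Sum.inl k), some (Sum.inr l) =>
        exact absurd hfw (by rw [lab_a]; have := lab_b_ge2 hij l; omega)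
    | some (Sum.inr k), some (Sum.inl l) =>
        exact absurd hfw (by rw [lab_a]; have := lab_b_ge2 hij k; omega)
    | some (Sum.inl k), some (Sum.inl l) =>
        cases p with
        | nil => exact absurd rfl huw
        | cons h q =>
          rename_i x
          have hx2 : 2 ≤ lab n i j x := by
            rcases adj_inl h with rfl | rfl
            · rw [lab_none]; omega
            · exact lab_b_ge2 hij k
          refine ⟨x, ?_, h.ne', ?_, ?_⟩
          · rw [SimpleGraph.Walk.support_cons]
            exact List.mem_cons_of_mem _ q.start_mem_support
          · rintro rfl
            rw [lab_a] at hx2; omega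
          · rw [lab_a]; omega
    | some (Sum.inr k), some (Sum.inr l) =>
        by_cases hk : k = i ∨ k = j
        · by_cases hl : l = i ∨ l = j
          · rcases hk with rfl | rfl
            · have hl' : l = j := by
                rcases hl with rfl | rfl
                · exact absurd rfl huw
                · rfl
              subst hl'
              obtain ⟨x, hx, hx1, hx2, hx3⟩ := key hn hij p hp
              refine ⟨x, hx, hx1, hx2, ?_⟩
              have h2 : lab n k l (some (Sum.inr k)) = 2 := by simp [lab]
              rw [h2]; exact hx3
            · have hl' : l = i := by
                rcases hl with rfl | rfl
                · rfl
                · exact absurd rfl huw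
              subst hl'
              obtain ⟨x, hx, hx1, hx2, hx3⟩ := key hn hij p.reverse hp.reverse
              rw [SimpleGraph.Walk.support_reverse, List.mem_reverse] at hx
              refine ⟨x, hx, hx2, hx1, ?_⟩
              have h2 : lab n l k (some (Sum.inr k)) = 2 := by simp [lab]
              rw [h2]; exact hx3
          · push_neg at hl
            have h2 : lab n i j (some (Sum.inr k)) = 2 := by
              simp only [lab, if_pos hk]
            have h3 := lab_b_ge3 (n := n) hij hl.1 hl.2
            omega
        · push_neg at hk
          by_cases hl : l = i ∨ l = j
          · have h2 : lab n i j (some (Sum.inr l)) = 2 := by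
              simp only [lab, if_pos hl]
            have h3 := lab_b_ge3 (n := n) hij hk.1 hk.2
            omega
          · push_neg at hl
            exact absurd (lab_b_inj hij hk.1 hk.2 hl.1 hl.2 hfw)
              (fun h => huw (by rw [h]))
end

section
/- For every integer n ≥ 4, the graph obtained from H_n by contracting the edge b_1 b_2 (i.e., replacing b_1 and b_2 by a single vertex w adjacent to a_1, a_2, and all b_j with 3 ≤ j ≤ n−1) has tree-depth at most n. -/
/-- The graph obtained from `H_n` by contracting the edge `b_1 b_2` into a single vertex `w`.
Here `none` is `v`, `some (Sum.inl i)` is `a_{i+1}`, `some (Sum.inr none)` is the contracted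
vertex `w` (adjacent to `a_1`, `a_2`, and all remaining `b`'s), and `some (Sum.inr (some j))`
is `b_{j+3}`. -/
def Hcontract (n : ℕ) : SimpleGraph (Option (Fin (n - 1) ⊕ Option (Fin (n - 3)))) :=
  SimpleGraph.fromRel (fun x y =>
    (∃ i : Fin (n - 1), x = none ∧ y = some (Sum.inl i)) ∨
    (∃ i : Fin (n - 1), x = some (Sum.inl i) ∧ (i : ℕ) < 2 ∧ y = some (Sum.inr none)) ∨
    (∃ (i : Fin (n - 1)) (j : Fin (n - 3)), x = some (Sum.inl i) ∧ (i : ℕ) = (j : ℕ) + 2 ∧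
      y = some (Sum.inr (some j))) ∨
    (∃ p q : Option (Fin (n - 3)), x = some (Sum.inr p) ∧ y = some (Sum.inr q)))

def rkH (n : ℕ) : Option (Fin (n - 1) ⊕ Option (Fin (n - 3))) → ℕ
  | none => n
  | some (Sum.inl _) => 1
  | some (Sum.inr none) => 2
  | some (Sum.inr (some j)) => (j : ℕ) + 3

lemma noAdjInl (n : ℕ) (i i' : Fin (n - 1)) :
    ¬ (Hcontract n).Adj (some (Sum.inl i)) (some (Sum.inl i')) := by
  simp [Hcontract, SimpleGraph.fromRel_adj]

/-- For `n ≥ 4`, contracting the edge `b_1 b_2` of `H_n` yields a graph of tree-depth at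
most `n`. -/
theorem treedepth_Hcontract_le (n : ℕ) (hn : 4 ≤ n) : treedepth (Hcontract n) ≤ n := by
  apply Nat.sInf_le
  refine ⟨rkH n, ?_, ?_⟩
  · rintro (_ | (i | (_ | j))) <;> simp [rkH] <;> omega
  · intro u w p hp hne hfeq
    have key : (∃ i : Fin (n-1), u = some (Sum.inl i)) ∧
        (∃ i : Fin (n-1), w = some (Sum.inl i)) := by
      rcases u with _ | (i | (_ | j)) <;> rcases w with _ | (i' | (_ | j')) <;>
        simp_all [rkH] <;> omega
    obtain ⟨⟨i, rfl⟩, ⟨i', rfl⟩⟩ := key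
    cases p with
    | nil => exact absurd rfl hne
    | cons h q =>
      rename_i c
      by_cases hcw : c = some (Sum.inl i')
      · subst hcw; exact absurd h (noAdjInl n i i')
      · refine ⟨c, ?_, h.ne', hcw, ?_⟩
        · simp [SimpleGraph.Walk.support_cons]
        · have hc1 : 1 < rkH n c := by
            rcases c with _ | (j | (_ | j))
            · simp [rkH]; omega
            · exact absurd h (noAdjInl n i j)
            · simp [rkH]
            · simp [rkH]
          simpa [rkH] using hc1
end

section
/- For every integer n ≥ 4 and every vertex x of H_n, the graph obtained from H_n by deleting x has tree-depth at most n. -/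
def labelF (n : ℕ) (x y : Option (Fin (n - 1) ⊕ Fin (n - 1))) : ℕ :=
  match y with
  | none => match x with
    | none => 1
    | _ => 2
  | some (Sum.inl _) => 1
  | some (Sum.inr j) =>
    match x with
    | none => j.val + 2
    | some (Sum.inl i) => if j = i then 1 else if j.val < i.val then j.val + 3 else j.val + 2
    | some (Sum.inr i) => if j.val < i.val then j.val + 3 else j.val + 2

lemma adj_inl_aux (n : ℕ) (j : Fin (n-1)) (z) (h : (Hgraph n).Adj (some (Sum.inl j)) z) :
    z = none ∨ z = some (Sum.inr j) := by
  simp only [Hgraph, SimpleGraph.fromRel_adj] at h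
  aesop

lemma adj_inr_aux (n : ℕ) (i : Fin (n-1)) (z) (h : (Hgraph n).Adj (some (Sum.inr i)) z) :
    z = some (Sum.inl i) ∨ ∃ k, k ≠ i ∧ z = some (Sum.inr k) := by
  simp only [Hgraph, SimpleGraph.fromRel_adj] at h
  aesop

lemma isRanking_of_simple {V : Type*} (G : SimpleGraph V) (k : ℕ) (f : V → ℕ)
    (h1 : ∀ v, 1 ≤ f v ∧ f v ≤ k)
    (h2 : ∀ u w, 2 ≤ f u → f u = f w → u = w)
    (h3 : ∀ u w, f u = 1 → G.Adj u w → 2 ≤ f w) : IsRanking G k f := by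
  refine ⟨h1, fun u w p _ hne hfeq => ?_⟩
  by_cases h : 2 ≤ f u
  · exact absurd (h2 u w h hfeq) hne
  · have hu1 : f u = 1 := by have := (h1 u).1; omega
    cases p with
    | nil => exact absurd rfl hne
    | @cons _ y _ hadj q =>
      have hy2 : 2 ≤ f y := h3 u y hu1 hadj
      refine ⟨y, by simp, ?_, ?_, ?_⟩
      · intro hyu; subst hyu; exact G.irrefl hadj
      · intro hyw; subst hyw; omega
      · omega
/-- For `n ≥ 4`, deleting any single vertex from `H_n` yields a graph of tree-depth at
most `n`. -/
theorem treedepth_Hgraph_deleteVertex (n : ℕ) (hn : 4 ≤ n)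
    (x : Option (Fin (n - 1) ⊕ Fin (n - 1))) :
    treedepth ((Hgraph n).induce {y | y ≠ x}) ≤ n := by
  apply Nat.sInf_le
  refine ⟨fun u => labelF n x u.val, ?_⟩
  apply isRanking_of_simple
  · -- bounds
    rintro ⟨v, hv⟩
    rcases v with _ | (j | j) <;> rcases x with _ | (i | i) <;>
      simp only [labelF] <;>
      (try have := j.isLt) <;> (try have := i.isLt) <;>
      (try split_ifs) <;> omega
  · -- injectivity on labels ≥ 2
    rintro ⟨u, hu⟩ ⟨w, hw⟩ h2 heq
    apply Subtype.ext
    simp only [ne_eq, Set.mem_setOf_eq] at hu hw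
    rcases u with _ | (j | j) <;> rcases w with _ | (k | k) <;>
      rcases x with _ | (i | i) <;>
      simp only [labelF, ne_eq, Option.some.injEq, Sum.inr.injEq, Sum.inl.injEq,
        Fin.ext_iff, reduceCtorEq, not_false_eq_true, Option.some_ne_none] at h2 heq hu hw ⊢ <;>
      (try split_ifs at h2 heq) <;>
      first
      | rfl
      | omega
  · -- neighbors of label-1 vertices have label ≥ 2
    rintro ⟨u, hu⟩ ⟨w, hw⟩ h1 hadj
    simp only [ne_eq, Set.mem_setOf_eq] at hu hw
    have hadj' : (Hgraph n).Adj u w := hadj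
    rcases u with _ | (j | j)
    · rcases x with _ | (i | i)
      · exact absurd rfl hu
      all_goals simp [labelF] at h1
    · rcases adj_inl_aux n j w hadj' with rfl | rfl
      · rcases x with _ | (i | i)
        · exact absurd rfl hw
        all_goals simp [labelF]
      · rcases x with _ | (i | i)
        · simp [labelF]
        · have hji : j ≠ i := fun h => hu (by simp [h])
          simp only [labelF, if_neg hji]
          split_ifs <;> omega
        · simp only [labelF]; split_ifs <;> omega
    · rcases x with _ | (i | i)
      · simp [labelF] at h1
      · simp only [labelF] at h1
        split_ifs at h1 with hji
        · subst hji
          rcases adj_inr_aux n j w hadj' with rfl | ⟨k, hk, rfl⟩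
          · exact absurd rfl hw
          · simp only [labelF, if_neg hk]
            split_ifs <;> omega
        · omega
        · omega
      · simp only [labelF] at h1
        split_ifs at h1 <;> omega
end

section
/- For every integer n ≥ 4 and every vertex u of H_n with u ≠ v, there exists an (n+1)-ranking f of H_n such that f(u) = 1 and f(w) ≠ 1 for all vertices w ≠ u; that is, every vertex of H_n other than v is 1-unique. -/
/-- The labeling: `v ↦ 3`; `a_i ↦ 1` if `a_i = u` else `2`; `b_i ↦ 1` if it is `u`,
`2` if `i = k` (and `b_k ≠ u`), and otherwise distinct labels `≥ 4`. -/
def flab (n : ℕ) (u : Option (Fin (n - 1) ⊕ Fin (n - 1))) (k : Fin (n - 1)) :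
    Option (Fin (n - 1) ⊕ Fin (n - 1)) → ℕ
  | none => 3
  | some (Sum.inl i) => if some (Sum.inl i) = u then 1 else 2
  | some (Sum.inr i) =>
      if some (Sum.inr i) = u then 1
      else if i = k then 2
      else if (i : ℕ) < (k : ℕ) then (i : ℕ) + 4 else (i : ℕ) + 3

lemma Hgraph_adj_inl {n : ℕ} {i : Fin (n - 1)} {x : Option (Fin (n - 1) ⊕ Fin (n - 1))}
    (h : (Hgraph n).Adj (some (Sum.inl i)) x) :
    x = none ∨ x = some (Sum.inr i) := by
  simp only [Hgraph, SimpleGraph.fromRel_adj] at h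
  obtain ⟨-, h | h⟩ := h
  · rcases h with ⟨i', h1, h2⟩ | ⟨i', h1, h2⟩ | ⟨i', j', h1, h2⟩
    · exact absurd h1 (by simp)
    · right; simp only [Option.some.injEq, Sum.inl.injEq] at h1; subst h1; exact h2
    · exact absurd h1 (by simp)
  · rcases h with ⟨i', h1, h2⟩ | ⟨i', h1, h2⟩ | ⟨i', j', h1, h2⟩
    · left; exact h1
    · exact absurd h2 (by simp)
    · exact absurd h2 (by simp)

lemma reach_b {n : ℕ} {i : Fin (n - 1)} {w : Option (Fin (n - 1) ⊕ Fin (n - 1))}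
    (p : (Hgraph n).Walk (some (Sum.inl i)) w)
    (hv : (none : Option (Fin (n - 1) ⊕ Fin (n - 1))) ∉ p.support)
    (hw : some (Sum.inl i) ≠ w) :
    some (Sum.inr i) ∈ p.support := by
  cases p with
  | nil => exact absurd rfl hw
  | cons h q =>
    rcases Hgraph_adj_inl h with rfl | rfl
    · exact absurd (by simp [SimpleGraph.Walk.support_cons]) hv
    · simp [SimpleGraph.Walk.support_cons]

section main
variable {n : ℕ} {u : Option (Fin (n - 1) ⊕ Fin (n - 1))} {k : Fin (n - 1)}

lemma key_lt {i : Fin (n - 1)} (h1 : i ≠ k) (h2 : ¬ ((i : ℕ) < (k : ℕ))) :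
    (k : ℕ) < (i : ℕ) := by
  have : (i : ℕ) ≠ (k : ℕ) := fun h => h1 (Fin.ext h)
  omega

lemma lab_b_ge (huk : u = some (Sum.inl k) ∨ u = some (Sum.inr k))
    {i : Fin (n - 1)} (hik : i ≠ k) : 4 ≤ flab n u k (some (Sum.inr i)) := by
  have hne : some (Sum.inr i) ≠ u := by
    rcases huk with rfl | rfl
    · simp
    · simp only [ne_eq, Option.some.injEq, Sum.inr.injEq]; exact hik
  simp only [flab, if_neg hne, if_neg hik]
  split_ifs with h
  · omega
  · have := key_lt hik h; omega

lemma lab_u (huk : u = some (Sum.inl k) ∨ u = some (Sum.inr k)) :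
    flab n u k u = 1 := by
  rcases huk with rfl | rfl <;> simp [flab]

lemma lab_eq_one {x : Option (Fin (n - 1) ⊕ Fin (n - 1))}
    (h : flab n u k x = 1) : x = u := by
  match x with
  | none => exact absurd h (by simp [flab])
  | some (Sum.inl i) =>
    revert h; simp only [flab]; split_ifs with h1
    · exact fun _ => h1
    · omega
  | some (Sum.inr i) =>
    revert h; simp only [flab]; split_ifs with h1 h2 h3
    · exact fun _ => h1
    · omega
    · omega
    · have := key_lt h2 h3; omega

lemma lab_ne_three {x : Option (Fin (n - 1) ⊕ Fin (n - 1))}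
    (hx : x ≠ none) : flab n u k x ≠ 3 := by
  match x with
  | none => exact absurd rfl hx
  | some (Sum.inl i) => simp only [flab]; split_ifs <;> omega
  | some (Sum.inr i) =>
    simp only [flab]; split_ifs with h1 h2 h3
    · omega
    · omega
    · omega
    · have := key_lt h2 h3; omega

lemma path_internal (huk : u = some (Sum.inl k) ∨ u = some (Sum.inr k))
    {i : Fin (n - 1)} {t : Option (Fin (n - 1) ⊕ Fin (n - 1))}
    (p : (Hgraph n).Walk (some (Sum.inl i)) t)
    (hik : i ≠ k) (hst : some (Sum.inl i) ≠ t) (ht : t ≠ none)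
    (hbt : some (Sum.inr i) ≠ t) :
    ∃ x ∈ p.support, x ≠ some (Sum.inl i) ∧ x ≠ t ∧ 2 < flab n u k x := by
  rcases Classical.em ((none : Option (Fin (n - 1) ⊕ Fin (n - 1))) ∈ p.support) with hv | hv
  · exact ⟨none, hv, by simp, fun h => ht h.symm, by simp [flab]⟩
  · exact ⟨some (Sum.inr i), reach_b p hv hst, by simp, hbt,
      lt_of_lt_of_le (by norm_num) (lab_b_ge huk hik)⟩

end main


/-- For `n ≥ 4`, every vertex of `H_n` other than `v` is 1-unique: some optimal
(i.e. `(n+1)`-)ranking of `H_n` assigns the label `1` to it and to no other vertex. -/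
theorem Hgraph_nonv_oneUnique (n : ℕ) (hn : 4 ≤ n)
    (u : Option (Fin (n - 1) ⊕ Fin (n - 1))) (hu : u ≠ none) :
    ∃ f, IsRanking (Hgraph n) (n + 1) f ∧ f u = 1 ∧ ∀ w, w ≠ u → f w ≠ 1 := by
  obtain ⟨c, rfl⟩ := Option.ne_none_iff_exists'.mp hu
  obtain ⟨k, huk⟩ : ∃ k : Fin (n - 1),
      some c = some (Sum.inl k) ∨ some c = some (Sum.inr k) := by
    cases c with
    | inl i => exact ⟨i, Or.inl rfl⟩
    | inr i => exact ⟨i, Or.inr rfl⟩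
  refine ⟨flab n (some c) k, ⟨?_, ?_⟩, lab_u huk, ?_⟩
  · -- bounds
    intro x
    match x with
    | none => simp only [flab]; omega
    | some (Sum.inl i) => simp only [flab]; split_ifs <;> omega
    | some (Sum.inr i) =>
      have hi := i.isLt
      have hkk := k.isLt
      simp only [flab]; split_ifs <;> omega
  · -- ranking path condition
    intro s t p hp hst hf
    have hsu : s ≠ some c := by
      intro h; subst h
      rw [lab_u huk] at hf
      exact hst (lab_eq_one hf.symm).symm
    have htu : t ≠ some c := by
      intro h; subst h
      rw [lab_u huk] at hf
      exact hst (lab_eq_one hf)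
    match s, t with
    | none, none => exact absurd rfl hst
    | none, some (Sum.inl j) =>
      exact absurd (hf.symm.trans rfl) (lab_ne_three (by simp))
    | none, some (Sum.inr j) =>
      exact absurd (hf.symm.trans rfl) (lab_ne_three (by simp))
    | some (Sum.inl i), none =>
      exact absurd (hf.trans rfl) (lab_ne_three (by simp))
    | some (Sum.inr i), none =>
      exact absurd (hf.trans rfl) (lab_ne_three (by simp))
    | some (Sum.inl i), some (Sum.inl j) =>
      have hij : i ≠ j := fun h => hst (by rw [h])
      have hs2 : flab n (some c) k (some (Sum.inl i)) = 2 := by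
        simp only [flab, if_neg hsu]
      rcases ne_or_eq i k with hik | hik
      · obtain ⟨x, hx, hxs, hxt, hxl⟩ :=
          path_internal huk p hik hst (by simp) (by simp)
        exact ⟨x, hx, hxs, hxt, by omega⟩
      · have hjk : j ≠ k := fun h => hij (hik.trans h.symm)
        obtain ⟨x, hx, hxs, hxt, hxl⟩ :=
          path_internal huk p.reverse hjk (fun h => hst h.symm) (by simp) (by simp)
        rw [SimpleGraph.Walk.support_reverse, List.mem_reverse] at hx
        exact ⟨x, hx, hxt, hxs, by omega⟩
    | some (Sum.inl i), some (Sum.inr j) =>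
      have hs2 : flab n (some c) k (some (Sum.inl i)) = 2 := by
        simp only [flab, if_neg hsu]
      have hjk : j = k := by
        by_contra hjk
        have := lab_b_ge huk hjk
        omega
      have huinl : some c = some (Sum.inl k) := by
        rcases huk with h | h
        · exact h
        · exact absurd (by rw [hjk, ← h]) htu
      have hik : i ≠ k := fun h => hsu (by rw [h, huinl])
      have hij : i ≠ j := fun h => hik (h.trans hjk)
      obtain ⟨x, hx, hxs, hxt, hxl⟩ :=
        path_internal huk p hik hst (by simp)
          (by simpa using fun h => hij (Fin.ext (congrArg Fin.val h)))
      exact ⟨x, hx, hxs, hxt, by omega⟩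
    | some (Sum.inr i), some (Sum.inl j) =>
      have hik : i = k := by
        by_contra hik
        have h4 := lab_b_ge huk hik
        have : flab n (some c) k (some (Sum.inl j)) = 2 := by
          simp only [flab, if_neg htu]
        omega
      have hs2 : flab n (some c) k (some (Sum.inr i)) = 2 := by
        simp only [flab, if_neg hsu, if_pos hik]
      have huinl : some c = some (Sum.inl k) := by
        rcases huk with h | h
        · exact h
        · exact absurd (by rw [hik, ← h]) hsu
      have hjk : j ≠ k := fun h => htu (by rw [h, huinl])
      have hji : j ≠ i := fun h => hjk (h.trans hik)
      obtain ⟨x, hx, hxs, hxt, hxl⟩ :=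
        path_internal huk p.reverse hjk (fun h => hst h.symm) (by simp)
          (by simpa using fun h => hji (Fin.ext (congrArg Fin.val h)))
      rw [SimpleGraph.Walk.support_reverse, List.mem_reverse] at hx
      exact ⟨x, hx, hxt, hxs, by omega⟩
    | some (Sum.inr i), some (Sum.inr j) =>
      exfalso
      have hij : i ≠ j := fun h => hst (by rw [h])
      have hvij : (i : ℕ) ≠ (j : ℕ) := fun h => hij (Fin.ext h)
      rcases eq_or_ne i k with hik | hik
      · have hjk : j ≠ k := fun h => hij (hik.trans h.symm)
        have := lab_b_ge huk hjk
        have : flab n (some c) k (some (Sum.inr i)) = 2 := by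
          simp only [flab, if_neg hsu, if_pos hik]
        omega
      · rcases eq_or_ne j k with hjk | hjk
        · have := lab_b_ge huk hik
          have : flab n (some c) k (some (Sum.inr j)) = 2 := by
            simp only [flab, if_neg htu, if_pos hjk]
          omega
        · have hik' : (i : ℕ) ≠ (k : ℕ) := fun h => hik (Fin.ext h)
          have hjk' : (j : ℕ) ≠ (k : ℕ) := fun h => hjk (Fin.ext h)
          revert hf
          simp only [flab, if_neg hsu, if_neg htu, if_neg hik, if_neg hjk]
          split_ifs <;> omega
  · -- uniqueness of label 1
    intro w hw h
    exact hw (lab_eq_one h)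
end
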